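/- Let E be an uncountable Polish space. Then for every countable ordinal α and every nonzero natural number p, there exists a compact countable subset K of E with Cantor-Bendixson characteristic CB(K) = (α,p). -/

import Mathlib

/-- The Cantor-Bendixson derivative of a set, by transfinite recursion. -/
noncomputable def cbDeriv {X : Type*} [TopologicalSpace X] (A : Set X) (o : Ordinal) : Set X :=
  Ordinal.limitRecOn o A (fun _ ih => derivedSet ih)
    (fun o _ ih => ⋂ (b : Set.Iio o), ih b.1 b.2)

/-- `IsCB A α p` : the Cantor-Bendixson characteristic of `A` is `(α, p)`,
i.e. `α` is the least ordinal with `A^(α)` finite, and `p = |A^(α)|`. -/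
def IsCB {X : Type*} [TopologicalSpace X] (A : Set X) (α : Ordinal) (p : ℕ) : Prop :=
  (cbDeriv A α).Finite ∧ (∀ β < α, ¬ (cbDeriv A β).Finite) ∧ (cbDeriv A α).ncard = p

/-!
Every uncountable Polish space contains a closed copy of the Cantor space `ℕ → Bool`, and
Cantor-Bendixson derivatives commute with closed embeddings, so it suffices to build `K`
there. Off the point `ones = 1^ω`, the Cantor space is the disjoint union of the clopen blocks
`1ⁿ0 · (ℕ → Bool)`, each a copy of the Cantor space via `toBlock n x = 1ⁿ0x`, and these blocks
accumulate only at `ones`. Putting a set `A n` into the `n`-th block and adding `ones` (`cone A`),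
derivatives are computed blockwise, and `ones` survives to stage `β` as long as infinitely
many blocks are nonempty at every earlier stage. Recursively, `tower α` is the cone over towers
of heights `γ < α`, each height occurring infinitely often: its `α`-th derivative is `{ones}`
and all earlier ones are infinite. Then `p` copies of `tower α` in distinct blocks have
characteristic `(α, p)`.
-/

open Set Filter Topology

section CantorBendixson

variable {X Y : Type*} [TopologicalSpace X] [TopologicalSpace Y]

theorem cbDeriv_zero (A : Set X) : cbDeriv A 0 = A :=
  Ordinal.limitRecOn_zero _ _ _

theorem cbDeriv_add_one (A : Set X) (o : Ordinal) :
    cbDeriv A (o + 1) = derivedSet (cbDeriv A o) :=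
  Ordinal.limitRecOn_add_one _ _ _ _

theorem cbDeriv_limit (A : Set X) {o : Ordinal} (ho : Order.IsSuccLimit o) :
    cbDeriv A o = ⋂ b : Iio o, cbDeriv A b :=
  Ordinal.limitRecOn_limit _ _ _ _ ho

theorem cbDeriv_subset_closure (A : Set X) (o : Ordinal) : cbDeriv A o ⊆ closure A := by
  induction o using Ordinal.limitRecOn with
  | zero => rw [cbDeriv_zero]; exact subset_closure
  | add_one o ih =>
    rw [cbDeriv_add_one]
    exact (derivedSet_subset_closure _).trans (closure_minimal ih isClosed_closure)
  | limit o ho ih =>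
    rw [cbDeriv_limit A ho]
    exact (iInter_subset _ ⟨0, ho.bot_lt⟩).trans (ih 0 ho.bot_lt)

theorem cbDeriv_subset_of_isClosed {A : Set X} (hA : IsClosed A) (o : Ordinal) :
    cbDeriv A o ⊆ A :=
  (cbDeriv_subset_closure A o).trans hA.closure_subset

theorem cbDeriv_empty (o : Ordinal) : cbDeriv (∅ : Set X) o = ∅ :=
  subset_empty_iff.mp (cbDeriv_subset_of_isClosed isClosed_empty o)

theorem isClosed_cbDeriv [T1Space X] {A : Set X} (hA : IsClosed A) (o : Ordinal) :
    IsClosed (cbDeriv A o) := by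
  induction o using Ordinal.limitRecOn with
  | zero => rwa [cbDeriv_zero]
  | add_one o _ => rw [cbDeriv_add_one]; exact isClosed_derivedSet _
  | limit o ho ih => rw [cbDeriv_limit A ho]; exact isClosed_iInter fun b => ih b b.2

theorem cbDeriv_antitone [T1Space X] {A : Set X} (hA : IsClosed A) : Antitone (cbDeriv A) := by
  intro γ β hγβ
  induction β using Ordinal.limitRecOn with
  | zero => rw [nonpos_iff_eq_zero.mp hγβ]
  | add_one β ih =>
    rcases hγβ.lt_or_eq with hlt | rfl
    · rw [cbDeriv_add_one]
      exact ((derivedSet_subset_closure _).trans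
        (isClosed_cbDeriv hA β).closure_subset).trans (ih (Order.lt_add_one_iff.mp hlt))
    · rfl
  | limit β hβ _ =>
    rcases hγβ.lt_or_eq with hlt | rfl
    · rw [cbDeriv_limit A hβ]; exact iInter_subset (fun b : Iio β => cbDeriv A b) ⟨γ, hlt⟩
    · rfl

theorem Set.Finite.derivedSet_eq_empty [T1Space X] {A : Set X} (hA : A.Finite) :
    derivedSet A = ∅ := by
  refine eq_empty_of_forall_notMem fun x hx => ?_
  rw [mem_derivedSet, accPt_principal_iff_nhdsWithin, ← mem_closure_iff_nhdsWithin_neBot,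
    hA.sdiff.isClosed.closure_eq] at hx
  exact hx.2 rfl

theorem cbDeriv_eq_empty_of_finite [T1Space X] {A : Set X} (hA : IsClosed A) {γ β : Ordinal}
    (hfin : (cbDeriv A γ).Finite) (hγβ : γ < β) : cbDeriv A β = ∅ := by
  refine subset_empty_iff.mp ((cbDeriv_antitone hA (Order.add_one_le_of_lt hγβ)).trans ?_)
  rw [cbDeriv_add_one, hfin.derivedSet_eq_empty]

theorem derivedSet_inter_of_isOpen {U : Set X} (hU : IsOpen U) (A : Set X) :
    derivedSet A ∩ U = derivedSet (A ∩ U) ∩ U := by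
  ext x
  refine and_congr_left fun hx => ?_
  rw [mem_derivedSet, mem_derivedSet, accPt_principal_iff_nhdsWithin,
    accPt_principal_iff_nhdsWithin, nhdsWithin_restrict _ hx hU, inter_sdiff_right_comm]

theorem cbDeriv_inter_of_isOpen {U : Set X} (hU : IsOpen U) (A : Set X) (o : Ordinal) :
    cbDeriv A o ∩ U = cbDeriv (A ∩ U) o ∩ U := by
  induction o using Ordinal.limitRecOn with
  | zero => rw [cbDeriv_zero, cbDeriv_zero, inter_assoc, inter_self]
  | add_one o ih =>
    rw [cbDeriv_add_one, cbDeriv_add_one, derivedSet_inter_of_isOpen hU, ih,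
      ← derivedSet_inter_of_isOpen hU]
  | limit o ho ih =>
    have : Nonempty (Iio o) := ⟨⟨0, ho.bot_lt⟩⟩
    rw [cbDeriv_limit _ ho, cbDeriv_limit _ ho, iInter_inter, iInter_inter]
    exact iInter_congr fun b => ih b b.2

theorem Topology.IsEmbedding.mem_derivedSet_image_iff {f : X → Y} (hf : IsEmbedding f)
    {A : Set X} {x : X} : f x ∈ derivedSet (f '' A) ↔ x ∈ derivedSet A := by
  rw [mem_derivedSet, mem_derivedSet, accPt_principal_iff_nhdsWithin,
    accPt_principal_iff_nhdsWithin, ← image_singleton, ← image_sdiff hf.injective,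
    ← hf.map_nhdsWithin_eq, map_neBot_iff]

theorem Topology.IsClosedEmbedding.derivedSet_image {f : X → Y} (hf : IsClosedEmbedding f)
    (A : Set X) : derivedSet (f '' A) = f '' derivedSet A := by
  refine Subset.antisymm (fun y hy => ?_) (hf.continuous.image_derivedSet hf.injective)
  obtain ⟨x, rfl⟩ : y ∈ range f :=
    hf.isClosed_range.closure_subset_iff.mpr (image_subset_range f A)
      (derivedSet_subset_closure _ hy)
  exact mem_image_of_mem f (hf.isEmbedding.mem_derivedSet_image_iff.mp hy)

theorem Topology.IsClosedEmbedding.cbDeriv_image {f : X → Y} (hf : IsClosedEmbedding f)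
    (A : Set X) (o : Ordinal) : cbDeriv (f '' A) o = f '' cbDeriv A o := by
  induction o using Ordinal.limitRecOn with
  | zero => rw [cbDeriv_zero, cbDeriv_zero]
  | add_one o ih => rw [cbDeriv_add_one, cbDeriv_add_one, ih, hf.derivedSet_image]
  | limit o ho ih =>
    have : Nonempty (Iio o) := ⟨⟨0, ho.bot_lt⟩⟩
    rw [cbDeriv_limit _ ho, cbDeriv_limit _ ho, hf.injective.injOn.image_iInter_eq]
    exact iInter_congr fun b => ih b b.2

theorem IsCB.image {f : X → Y} (hf : IsClosedEmbedding f) {A : Set X} {α : Ordinal} {p : ℕ}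
    (hA : IsCB A α p) : IsCB (f '' A) α p := by
  obtain ⟨hfin, hinf, hcard⟩ := hA
  simp only [IsCB, hf.cbDeriv_image, finite_image_iff hf.injective.injOn,
    ncard_image_of_injective _ hf.injective]
  exact ⟨hfin, hinf, hcard⟩

end CantorBendixson

namespace CantorCB

def ones : ℕ → Bool := fun _ => true

def toBlock (n : ℕ) (x : ℕ → Bool) : ℕ → Bool :=
  fun k => if k < n then true else if k = n then false else x (k - (n + 1))

def block (n : ℕ) : Set (ℕ → Bool) := {y | (∀ k < n, y k = true) ∧ y n = false}

theorem toBlock_mem_block (n : ℕ) (x : ℕ → Bool) : toBlock n x ∈ block n :=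
  ⟨fun k hk => by simp [toBlock, hk], by simp [toBlock]⟩

theorem ones_notMem_block (n : ℕ) : ones ∉ block n := fun h => by simpa [ones] using h.2

theorem eq_of_mem_block {y : ℕ → Bool} {m n : ℕ} (hm : y ∈ block m) (hn : y ∈ block n) :
    m = n := by
  by_contra hmn
  rcases Nat.lt_or_gt_of_ne hmn with h | h
  · simpa [hm.2] using hn.1 m h
  · simpa [hn.2] using hm.1 n h

theorem eq_ones_or_mem_block (y : ℕ → Bool) : y = ones ∨ ∃ n, y ∈ block n := by
  by_cases h : ∃ k, y k = false
  · classical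
    exact Or.inr ⟨Nat.find h, fun k hk => by simpa using Nat.find_min h hk, Nat.find_spec h⟩
  · rw [not_exists] at h
    exact Or.inl (funext fun k => by simpa [ones] using h k)

theorem isOpen_block (n : ℕ) : IsOpen (block n) := by
  have hcoord (k : ℕ) (b : Bool) : IsOpen {y : ℕ → Bool | y k = b} :=
    (isOpen_discrete {b}).preimage (continuous_apply (A := fun _ : ℕ => Bool) k)
  have : block n = (⋂ k ∈ Iio n, {y | y k = true}) ∩ {y | y n = false} := by
    ext y; simp [block]
  rw [this]
  exact ((finite_Iio n).isOpen_biInter fun k _ => hcoord k true).inter (hcoord n false)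

theorem toBlock_injective (n : ℕ) : Function.Injective (toBlock n) :=
  Function.LeftInverse.injective (g := fun y k => y (k + (n + 1))) fun x => funext fun k => by
    simp [toBlock, show ¬ k + (n + 1) < n by omega, show k + (n + 1) ≠ n by omega]

theorem isClosedEmbedding_toBlock (n : ℕ) : IsClosedEmbedding (toBlock n) := by
  refine Continuous.isClosedEmbedding (continuous_pi fun k => ?_) (toBlock_injective n)
  by_cases h₁ : k < n <;> by_cases h₂ : k = n <;>
    simp [toBlock, h₁, h₂, continuous_apply, continuous_const]

theorem toBlock_eq_toBlock_iff {m n : ℕ} {x y : ℕ → Bool} :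
    toBlock m x = toBlock n y ↔ m = n ∧ x = y := by
  refine ⟨fun h => ?_, fun ⟨hmn, hxy⟩ => hmn ▸ hxy ▸ rfl⟩
  obtain rfl := eq_of_mem_block (toBlock_mem_block m x) (h ▸ toBlock_mem_block n y)
  exact ⟨rfl, toBlock_injective m h⟩

theorem tendsto_toBlock (x : ℕ → ℕ → Bool) :
    Tendsto (fun n => toBlock n (x n)) atTop (𝓝 ones) :=
  tendsto_pi_nhds.2 fun k => tendsto_const_nhds.congr'
    ((eventually_gt_atTop k).mono fun n hn => by simp [toBlock, ones, hn])

end CantorCB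

namespace CantorCB

variable {A : ℕ → Set (ℕ → Bool)}

def glue (A : ℕ → Set (ℕ → Bool)) : Set (ℕ → Bool) := ⋃ n, toBlock n '' A n

def cone (A : ℕ → Set (ℕ → Bool)) : Set (ℕ → Bool) := insert ones (glue A)

theorem ones_notMem_glue : ones ∉ glue A := by
  rintro ⟨_, ⟨n, rfl⟩, x, -, hx⟩
  exact ones_notMem_block n (hx ▸ toBlock_mem_block n x)

theorem glue_inter_block (A : ℕ → Set (ℕ → Bool)) (n : ℕ) :
    glue A ∩ block n = toBlock n '' A n := by
  ext y
  constructor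
  · rintro ⟨⟨_, ⟨m, rfl⟩, x, hx, rfl⟩, hy⟩
    obtain rfl := eq_of_mem_block (toBlock_mem_block m x) hy
    exact mem_image_of_mem _ hx
  · rintro ⟨x, hx, rfl⟩
    exact ⟨mem_iUnion.2 ⟨n, mem_image_of_mem _ hx⟩, toBlock_mem_block n x⟩

theorem cone_inter_block (A : ℕ → Set (ℕ → Bool)) (n : ℕ) :
    cone A ∩ block n = toBlock n '' A n := by
  rw [cone, insert_inter_of_notMem (ones_notMem_block n), glue_inter_block]

theorem eq_of_inter_block_eq {S T : Set (ℕ → Bool)} (hones : ones ∈ S ↔ ones ∈ T)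
    (hblock : ∀ n, S ∩ block n = T ∩ block n) : S = T := by
  ext y
  rcases eq_ones_or_mem_block y with rfl | ⟨n, hn⟩
  · exact hones
  · simpa [hn] using congrArg (y ∈ ·) (hblock n)

theorem cbDeriv_inter_block {T B : Set (ℕ → Bool)} {n : ℕ}
    (hT : T ∩ block n = toBlock n '' B) (o : Ordinal) :
    cbDeriv T o ∩ block n = toBlock n '' cbDeriv B o := by
  rw [cbDeriv_inter_of_isOpen (isOpen_block n), hT, (isClosedEmbedding_toBlock n).cbDeriv_image,
    inter_eq_left]
  rintro _ ⟨x, -, rfl⟩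
  exact toBlock_mem_block n x

theorem ones_mem_derivedSet_glue (h : {n | (A n).Nonempty}.Infinite) :
    ones ∈ derivedSet (glue A) := by
  choose! x hx using fun n (hn : (A n).Nonempty) => hn
  rw [mem_derivedSet, accPt_iff_frequently]
  refine (tendsto_toBlock x).frequently ((Nat.frequently_atTop_iff_infinite.2 h).mono ?_)
  intro n hn
  exact ⟨fun he => ones_notMem_block n (he ▸ toBlock_mem_block n (x n)),
    mem_iUnion.2 ⟨n, mem_image_of_mem _ (hx n hn)⟩⟩

theorem infinite_glue (h : {n | (A n).Nonempty}.Infinite) : (glue A).Infinite := fun hfin => by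
  simpa [hfin.derivedSet_eq_empty] using ones_mem_derivedSet_glue h

theorem isClosed_cone (hA : ∀ n, IsClosed (A n)) : IsClosed (cone A) := by
  refine isClosed_of_closure_subset fun y hy => ?_
  rcases eq_ones_or_mem_block y with rfl | ⟨n, hn⟩
  · exact mem_insert _ _
  · have : y ∈ closure (toBlock n '' A n) := by
      rw [← cone_inter_block, inter_comm]
      exact (isOpen_block n).inter_closure ⟨hn, hy⟩
    rw [((isClosedEmbedding_toBlock n).isClosedMap _ (hA n)).closure_eq] at this
    exact mem_insert_of_mem _ (mem_iUnion.2 ⟨n, this⟩)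

theorem glue_subset_cbDeriv_cone (A : ℕ → Set (ℕ → Bool)) (o : Ordinal) :
    glue (fun n => cbDeriv (A n) o) ⊆ cbDeriv (cone A) o := by
  rintro y ⟨_, ⟨n, rfl⟩, hy⟩
  have : y ∈ cbDeriv (cone A) o ∩ block n := by
    rwa [cbDeriv_inter_block (cone_inter_block A n)]
  exact this.1

theorem ones_mem_cbDeriv_cone {o : Ordinal}
    (h : ∀ β < o, {n | (cbDeriv (A n) β).Nonempty}.Infinite) : ones ∈ cbDeriv (cone A) o := by
  induction o using Ordinal.limitRecOn with
  | zero => rw [cbDeriv_zero]; exact mem_insert _ _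
  | add_one o _ =>
    rw [cbDeriv_add_one]
    exact derivedSet_mono _ _ (glue_subset_cbDeriv_cone A o)
      (ones_mem_derivedSet_glue (h o (Order.lt_add_one_iff.2 le_rfl)))
  | limit o ho ih =>
    rw [cbDeriv_limit _ ho]
    exact mem_iInter.2 fun b => ih b b.2 fun β hβ => h β (hβ.trans b.2)

theorem cbDeriv_cone {o : Ordinal} (h : ∀ β < o, {n | (cbDeriv (A n) β).Nonempty}.Infinite) :
    cbDeriv (cone A) o = cone fun n => cbDeriv (A n) o :=
  eq_of_inter_block_eq (iff_of_true (ones_mem_cbDeriv_cone h) (mem_insert _ _)) fun n => by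
    rw [cbDeriv_inter_block (cone_inter_block A n), cone_inter_block]

theorem cbDeriv_glue (hA : IsClosed (glue A)) (o : Ordinal) :
    cbDeriv (glue A) o = glue fun n => cbDeriv (A n) o :=
  eq_of_inter_block_eq
    (iff_of_false (fun h => ones_notMem_glue (cbDeriv_subset_of_isClosed hA o h)) ones_notMem_glue)
    fun n => by rw [cbDeriv_inter_block (glue_inter_block A n), glue_inter_block]

end CantorCB

theorem exists_nat_infinite_fibers (ι : Type*) [Countable ι] [Nonempty ι] :
    ∃ g : ℕ → ι, ∀ i, {n | g n = i}.Infinite := by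
  obtain ⟨s, hs⟩ := exists_surjective_nat ι
  refine ⟨fun n => s n.unpair.2, fun i => ?_⟩
  obtain ⟨m, rfl⟩ := hs i
  exact infinite_of_injective_forall_mem (f := fun k => Nat.pair k m)
    (fun a b hab => (Nat.pair_eq_pair.mp hab).1) fun k => by simp

theorem Ordinal.countable_Iio_of_lt_omega_one {α : Ordinal} (hα : α < (Cardinal.aleph 1).ord) :
    Countable (Iio α) := by
  rw [← Cardinal.mk_le_aleph0_iff, Cardinal.mk_Iio_ordinal, Cardinal.lift_le_aleph0]
  simpa using Cardinal.lt_ord.1 hα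

namespace CantorCB

-- If `Iio α` has no such enumeration (`α = 0`, or `α` uncountable), `tower α = {ones}`.
open Classical in
noncomputable def tower (α : Ordinal.{u}) : Set (ℕ → Bool) :=
  cone fun n =>
    if h : ∃ g : ℕ → Iio α, ∀ γ, {n | g n = γ}.Infinite then tower (h.choose n) else ∅
termination_by α
decreasing_by exact (h.choose n).2

theorem tower_zero : tower 0 = {ones} := by
  rw [tower]
  simp [cone, glue]

theorem tower_eq {α : Ordinal} (h : ∃ g : ℕ → Iio α, ∀ γ, {n | g n = γ}.Infinite) :
    tower α = cone fun n => tower (h.choose n) := by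
  rw [tower]
  simp only [dif_pos h]

theorem isClosed_tower (α : Ordinal) : IsClosed (tower α) := by
  induction α using WellFoundedLT.induction with
  | _ α ih =>
    rw [tower]
    refine isClosed_cone fun n => ?_
    split_ifs with h
    exacts [ih _ (h.choose n).2, isClosed_empty]

theorem countable_tower (α : Ordinal) : (tower α).Countable := by
  induction α using WellFoundedLT.induction with
  | _ α ih =>
    rw [tower]
    refine (countable_iUnion fun n => Countable.image ?_ _).insert _
    split_ifs with h
    exacts [ih _ (h.choose n).2, countable_empty]

theorem cbDeriv_tower {α : Ordinal} (hα : α < (Cardinal.aleph 1).ord) :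
    cbDeriv (tower α) α = {ones} ∧ ∀ β < α, (cbDeriv (tower α) β).Infinite := by
  induction α using WellFoundedLT.induction with
  | _ α ih =>
    rcases eq_or_ne α 0 with rfl | hα0
    · simp [tower_zero, cbDeriv_zero]
    have := Ordinal.countable_Iio_of_lt_omega_one hα
    have : Nonempty (Iio α) := ⟨⟨0, pos_iff_ne_zero.2 hα0⟩⟩
    have hg := exists_nat_infinite_fibers (Iio α)
    have hfibers := hg.choose_spec
    rw [tower_eq hg]
    generalize hg.choose = g at hfibers ⊢
    have IH (n : ℕ) := ih (g n) (g n).2 ((g n).2.trans hα)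
    have hne : ∀ β < α, {n | (cbDeriv (tower (g n)) β).Nonempty}.Infinite := by
      refine fun β hβ => (hfibers ⟨β, hβ⟩).mono fun n (hn : g n = ⟨β, hβ⟩) => ?_
      have hgn : (g n : Ordinal) = β := congrArg Subtype.val hn
      show (cbDeriv (tower (g n)) β).Nonempty
      rw [← hgn, (IH n).1]
      exact singleton_nonempty _
    refine ⟨?_, fun β hβ => ?_⟩
    · have hempty (n : ℕ) : cbDeriv (tower (g n)) α = ∅ :=
        cbDeriv_eq_empty_of_finite (isClosed_tower _) ((IH n).1 ▸ finite_singleton _) (g n).2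
      rw [cbDeriv_cone hne]
      simp [hempty, cone, glue]
    · rw [cbDeriv_cone fun γ hγ => hne γ (hγ.trans hβ)]
      exact (infinite_glue (hne β hβ)).mono (subset_insert _ _)

theorem glue_ite (p : ℕ) (S : Set (ℕ → Bool)) :
    glue (fun n => if n < p then S else ∅) = ⋃ n < p, toBlock n '' S := by
  ext y
  simp [glue, and_assoc]

theorem isClosed_biUnion_toBlock {S : Set (ℕ → Bool)} (hS : IsClosed S) (p : ℕ) :
    IsClosed (⋃ n < p, toBlock n '' S) :=
  (finite_Iio p).isClosed_biUnion fun n _ => (isClosedEmbedding_toBlock n).isClosedMap _ hS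

theorem cbDeriv_biUnion_toBlock {S : Set (ℕ → Bool)} (hS : IsClosed S) (p : ℕ) (o : Ordinal) :
    cbDeriv (⋃ n < p, toBlock n '' S) o = ⋃ n < p, toBlock n '' cbDeriv S o := by
  have hcl := isClosed_biUnion_toBlock hS p
  rw [← glue_ite] at hcl ⊢
  rw [cbDeriv_glue hcl, ← glue_ite]
  simp only [apply_ite (cbDeriv · o), cbDeriv_empty]

theorem exists_isCB {α : Ordinal} (hα : α < (Cardinal.aleph 1).ord) {p : ℕ} (hp : p ≠ 0) :
    ∃ T : Set (ℕ → Bool), IsClosed T ∧ T.Countable ∧ IsCB T α p := by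
  obtain ⟨htop, hinf⟩ := cbDeriv_tower hα
  have hder := cbDeriv_biUnion_toBlock (isClosed_tower α) p
  have htop' : (⋃ n < p, toBlock n '' cbDeriv (tower α) α) = (toBlock · ones) '' Iio p := by
    ext y; simp [htop, eq_comm]
  refine ⟨_, isClosed_biUnion_toBlock (isClosed_tower α) p,
    countable_iUnion fun n => countable_iUnion fun _ => (countable_tower α).image _,
    ?_, fun β hβ => ?_, ?_⟩
  · rw [hder, htop']
    exact (finite_Iio p).image _
  · rw [hder]
    exact ((hinf β hβ).image (toBlock_injective 0).injOn).mono
      (subset_biUnion_of_mem (u := fun n => toBlock n '' cbDeriv (tower α) β)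
        (Nat.pos_of_ne_zero hp))
  · rw [hder, htop', ncard_image_of_injective _ fun m n h => (toBlock_eq_toBlock_iff.1 h).1]
    simp

end CantorCB

theorem stmt15 {E : Type*} [TopologicalSpace E] [PolishSpace E] (h : ¬ Countable E)
    (α : Ordinal) (hα : α < (Cardinal.aleph 1).ord) (p : ℕ) (hp : p ≠ 0) :
    ∃ K : Set E, IsCompact K ∧ K.Countable ∧ IsCB K α p := by
  let := TopologicalSpace.upgradeIsCompletelyMetrizable E
  obtain ⟨f, -, hcont, hinj⟩ :=
    isClosed_univ.exists_nat_bool_injection_of_not_countable (countable_univ_iff.not.2 h)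
  have hf : IsClosedEmbedding f := hcont.isClosedEmbedding hinj
  obtain ⟨T, hTcl, hTct, hT⟩ := CantorCB.exists_isCB hα hp
  exact ⟨f '' T, hTcl.isCompact.image hcont, hTct.image f, hT.image hf⟩
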